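/- Let Γ be a cancellation monoid with neutral element e, A = ⊕_{γ∈Γ} A_γ a Γ-graded ring, and 𝔐 the two-sided ideal of A generated by all non-invertible homogeneous elements. If 𝔐 is a proper ideal of A, then A_e is a local ring in the classical sense whose unique maximal (left, right and two-sided) ideal is m = 𝔐 ∩ A_e. -/
import Mathlib

private lemma isUnit_of_isUnit_coe
    {Γ : Type*} [AddCancelMonoid Γ] [DecidableEq Γ]
    {A : Type*} [Ring A] (𝒜 : Γ → AddSubgroup A) [GradedRing 𝒜]
    (x : 𝒜 0) (hx : IsUnit (x : A)) : IsUnit x := by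
  obtain ⟨u, hu⟩ := hx
  set y : A := ↑u⁻¹ with hy
  have hxy : (x : A) * y = 1 := by rw [← hu]; exact u.mul_inv
  have hyx : y * (x : A) = 1 := by rw [← hu]; exact u.inv_mul
  set y₀ : 𝒜 0 := DirectSum.decompose 𝒜 y 0 with hy₀
  have h1 : (1 : A) ∈ 𝒜 0 := SetLike.one_mem_graded 𝒜
  have hdec1 : (DirectSum.decompose 𝒜 (1 : A) 0 : A) = 1 :=
    DirectSum.decompose_of_mem_same 𝒜 h1
  have hleft : (x : A) * (y₀ : A) = 1 := by
    have := DirectSum.coe_decompose_mul_add_of_left_mem (i := 0) (j := 0) 𝒜 x.2 (b := y)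
    rw [zero_add, hxy, hdec1] at this
    exact this.symm
  have hright : (y₀ : A) * (x : A) = 1 := by
    have := DirectSum.coe_decompose_mul_add_of_right_mem (i := 0) (j := 0) 𝒜 x.2 (a := y)
    rw [zero_add, hyx, hdec1] at this
    exact this.symm
  exact ⟨⟨x, y₀, Subtype.ext (by push_cast; exact hleft),
    Subtype.ext (by push_cast; exact hright)⟩, rfl⟩

theorem degree_zero_isLocalRing_of_span_nonunit_homogeneous_ne_top
    {Γ : Type*} [AddCancelMonoid Γ] [DecidableEq Γ]
    {A : Type*} [Ring A] (𝒜 : Γ → AddSubgroup A) [GradedRing 𝒜]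
    (h : TwoSidedIdeal.span {a : A | (a ≠ 0 ∧ ∃ γ : Γ, a ∈ 𝒜 γ) ∧ ¬IsUnit a} ≠ ⊤) :
    IsLocalRing (𝒜 0) ∧
      ∀ x : 𝒜 0,
        x ∈ nonunits (𝒜 0) ↔
          (x : A) ∈ TwoSidedIdeal.span {a : A | (a ≠ 0 ∧ ∃ γ : Γ, a ∈ 𝒜 γ) ∧ ¬IsUnit a} := by
  set I := TwoSidedIdeal.span {a : A | (a ≠ 0 ∧ ∃ γ : Γ, a ∈ 𝒜 γ) ∧ ¬IsUnit a} with hI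
  have hone : (1 : A) ∉ I := fun h1 => h (I.eq_top h1)
  have key : ∀ x : 𝒜 0, x ∈ nonunits (𝒜 0) ↔ (x : A) ∈ I := by
    intro x
    constructor
    · intro hx
      by_cases hx0 : (x : A) = 0
      · rw [hx0]; exact I.zero_mem
      · refine TwoSidedIdeal.subset_span ⟨⟨hx0, 0, x.2⟩, fun hu => ?_⟩
        exact hx (isUnit_of_isUnit_coe 𝒜 x hu)
    · intro hx hu
      obtain ⟨u, hu⟩ := hu
      have e : (↑u⁻¹ * x : 𝒜 0) = 1 := by rw [← hu]; exact u.inv_mul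
      have : ((↑u⁻¹ * x : 𝒜 0) : A) ∈ I := by
        push_cast
        exact I.mul_mem_left _ _ hx
      rw [e] at this
      exact hone this
  have hnt : Nontrivial (𝒜 0) := by
    refine ⟨1, 0, fun h10 => ?_⟩
    have e : (1 : A) = 0 := by simpa using congrArg Subtype.val h10
    exact hone (e ▸ I.zero_mem)
  refine ⟨⟨fun {a b} hab => ?_⟩, key⟩
  rw [or_iff_not_and_not]
  rintro ⟨ha, hb⟩
  have ha' := (key a).1 ha
  have hb' := (key b).1 hb
  have : ((a + b : 𝒜 0) : A) ∈ I := by push_cast; exact I.add_mem ha' hb'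
  rw [hab] at this
  exact hone this
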